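/- Let ξ̄ > 0 and set ν_c = 1/(1 + ξ̄⁻¹√(2/π)). For every ν with ν_c < ν < 1, the map U ↦ Φ_a(U; ν, 0, ξ̄) has a fixed point U* in the open interval (0, 1/2), and then 1 − U* ∈ (1/2, 1) is also a fixed point. -/

import Mathlib

/-!
For `μ = 0` the map is `U ↦ erfc (k (1 - 2U)) / 2` with gain
`k = ν / ((1 - ν) ξ √2)`, and `ν > ν_c` is exactly `k > √π / 2`. The map fixes `1/2`, where
its slope is `2k / √π > 1`, so `Φ(U) - U` is negative just left of `1/2`, while it is positive
at `U = 0`; the intermediate value theorem gives a fixed point in `(0, 1/2)`. The reflection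
`erfc (-x) = 2 - erfc x` turns it into the fixed point `1 - U`.
-/

open MeasureTheory

/-- The complementary error function `erfc x = (2/√π) ∫_x^∞ exp(−t²) dt`. -/
noncomputable def erfc (x : ℝ) : ℝ :=
  (2 / Real.sqrt Real.pi) * ∫ t in Set.Ioi x, Real.exp (-t ^ 2)

/-- The approximate coarse evolution map
`Φ_a(U; ν̄, μ̄, ξ̄) = (1/2)·erfc[(1/(ξ̄√2))·(ν̄(1−2U)/(1−ν̄) − μ̄)]`. -/
noncomputable def PhiA (U ν μ ξ : ℝ) : ℝ :=
  (1 / 2) * erfc ((1 / (ξ * Real.sqrt 2)) * (ν * (1 - 2 * U) / (1 - ν) - μ))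

open Set Filter Topology Real

theorem exists_mem_Ioo_eq_zero_of_deriv_pos {g : ℝ → ℝ} {a b : ℝ} (hab : a < b)
    (hg : ContinuousOn g (Icc a b)) (ha : 0 < g a) (hb : g b = 0) (hd : 0 < deriv g b) :
    ∃ c ∈ Ioo a b, g c = 0 := by
  obtain ⟨y, hy_sign, hy⟩ :=
    (((eventually_nhdsWithin_sign_eq_of_deriv_pos hd hb).filter_mono nhdsWithin_le_nhds).and
      (Ioo_mem_nhdsLT hab)).exists
  have hgy : g y < 0 := by
    rw [_root_.sign_neg (sub_neg.2 hy.2)] at hy_sign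
    exact sign_eq_neg_one_iff.1 hy_sign
  obtain ⟨c, hc, hgc⟩ :=
    intermediate_value_Ioo' hy.1.le (hg.mono (Icc_subset_Icc_right hy.2.le)) ⟨hgy, ha⟩
  exact ⟨c, ⟨hc.1, hc.2.trans hy.2⟩, hgc⟩

theorem integrable_exp_neg_sq : Integrable fun t : ℝ => exp (-t ^ 2) := by
  simpa using integrable_exp_neg_mul_sq one_pos

theorem erfc_zero : erfc 0 = 1 := by
  have : sqrt π ≠ 0 := by positivity
  rw [erfc, show (∫ t in Ioi (0 : ℝ), exp (-t ^ 2)) = sqrt π / 2 by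
    simpa using integral_gaussian_Ioi 1]
  field_simp

theorem erfc_eq_one_sub_integral (x : ℝ) :
    erfc x = 1 - 2 / sqrt π * ∫ t in (0 : ℝ)..x, exp (-t ^ 2) := by
  have hsplit := intervalIntegral.integral_interval_add_Ioi (a := 0) (b := x) (μ := volume)
    integrable_exp_neg_sq.integrableOn integrable_exp_neg_sq.integrableOn
  rw [← erfc_zero, erfc, erfc, ← hsplit]
  ring

theorem erfc_neg (x : ℝ) : erfc (-x) = 2 - erfc x := by
  have hodd : ∫ t in (0 : ℝ)..-x, exp (-t ^ 2) = -∫ t in (0 : ℝ)..x, exp (-t ^ 2) := by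
    have h := intervalIntegral.integral_comp_neg (a := 0) (b := x) fun t => exp (-t ^ 2)
    simp only [neg_sq, neg_zero] at h
    rw [intervalIntegral.integral_symm, h]
  rw [erfc_eq_one_sub_integral, erfc_eq_one_sub_integral, hodd]
  ring

theorem erfc_pos (x : ℝ) : 0 < erfc x := by
  have h : 0 < ∫ t in Ioi x, exp (-t ^ 2) := by
    rw [setIntegral_pos_iff_support_of_nonneg_ae (.of_forall fun t => (exp_pos _).le)
      integrable_exp_neg_sq.integrableOn]
    simp [Function.support, exp_ne_zero]
  exact mul_pos (by positivity) h

theorem hasDerivAt_erfc (x : ℝ) : HasDerivAt erfc (-(2 / sqrt π) * exp (-x ^ 2)) x := by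
  have hcont : Continuous fun t : ℝ => exp (-t ^ 2) := by fun_prop
  have hFTC := intervalIntegral.integral_hasDerivAt_right (a := 0) (b := x)
    integrable_exp_neg_sq.intervalIntegrable (hcont.stronglyMeasurableAtFilter _ _)
    hcont.continuousAt
  rw [show erfc = _ from funext erfc_eq_one_sub_integral]
  exact ((hFTC.const_mul (2 / sqrt π)).const_sub 1).congr_deriv (by ring)

theorem continuous_erfc : Continuous erfc :=
  continuous_iff_continuousAt.2 fun x => (hasDerivAt_erfc x).continuousAt

theorem exists_half_erfc_eq_self {k : ℝ} (hk : sqrt π / 2 < k) :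
    ∃ U ∈ Ioo (0 : ℝ) (1 / 2), 1 / 2 * erfc (k * (1 - 2 * U)) = U := by
  set g : ℝ → ℝ := fun U => 1 / 2 * erfc (k * (1 - 2 * U)) - U
  have hg : Continuous g := by
    have := continuous_erfc.comp (show Continuous fun U : ℝ => k * (1 - 2 * U) by fun_prop)
    exact (continuous_const.mul this).sub continuous_id
  have hg0 : 0 < g 0 := by
    simpa [g] using erfc_pos k
  have hg_half : g (1 / 2) = 0 := by
    norm_num [g, erfc_zero]
  have hslope : HasDerivAt g (2 * k / sqrt π - 1) (1 / 2) := by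
    have hinner : HasDerivAt (fun U : ℝ => k * (1 - 2 * U)) (-(k * 2)) (1 / 2) := by
      simpa using (((hasDerivAt_id (1 / 2 : ℝ)).const_mul 2).const_sub 1).const_mul k
    exact ((((hasDerivAt_erfc _).comp _ hinner).const_mul (1 / 2)).sub
      (hasDerivAt_id _)).congr_deriv (by norm_num; ring)
  obtain ⟨U, hU, hgU⟩ := exists_mem_Ioo_eq_zero_of_deriv_pos (by norm_num) hg.continuousOn hg0
    hg_half (by rw [hslope.deriv, sub_pos, lt_div_iff₀ (by positivity)]; linarith)
  exact ⟨U, hU, sub_eq_zero.1 hgU⟩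

theorem PhiA_zero_eq (U ν ξ : ℝ) :
    PhiA U ν 0 ξ = 1 / 2 * erfc (ν / ((1 - ν) * (ξ * sqrt 2)) * (1 - 2 * U)) := by
  rw [PhiA]
  congr 2
  simp only [div_eq_mul_inv, mul_inv]
  ring

theorem PhiA_one_sub (U ν μ ξ : ℝ) : PhiA (1 - U) ν μ ξ = 1 - PhiA U ν (-μ) ξ := by
  have harg : 1 / (ξ * sqrt 2) * (ν * (1 - 2 * (1 - U)) / (1 - ν) - μ)
      = -(1 / (ξ * sqrt 2) * (ν * (1 - 2 * U) / (1 - ν) - -μ)) := by ring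
  rw [PhiA, PhiA, harg, erfc_neg]
  ring

theorem sqrt_pi_div_two_lt_gain {ξ ν : ℝ} (hξ : 0 < ξ)
    (hν : 1 / (1 + ξ⁻¹ * sqrt (2 / π)) < ν) (hν1 : ν < 1) :
    sqrt π / 2 < ν / ((1 - ν) * (ξ * sqrt 2)) := by
  have h1 : 1 - ν < ν * (ξ⁻¹ * (sqrt 2 / sqrt π)) := by
    rw [div_lt_iff₀ (by positivity), sqrt_div zero_le_two] at hν
    linarith
  rw [lt_div_iff₀ (mul_pos (by linarith) (by positivity))]
  have := mul_lt_mul_of_pos_right h1 (by positivity : 0 < ξ * sqrt π * sqrt 2 / 2)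
  calc sqrt π / 2 * ((1 - ν) * (ξ * sqrt 2)) = (1 - ν) * (ξ * sqrt π * sqrt 2 / 2) := by ring
    _ < ν * (ξ⁻¹ * (sqrt 2 / sqrt π)) * (ξ * sqrt π * sqrt 2 / 2) := this
    _ = ν := by field_simp; norm_num

/-- Let `ξ̄ > 0` and `ν_c = 1/(1 + ξ̄⁻¹√(2/π))`. For every `ν` with
`ν_c < ν < 1`, the map `U ↦ Φ_a(U; ν, 0, ξ̄)` has a fixed point `U*` in `(0, 1/2)`,
and then `1 − U* ∈ (1/2, 1)` is also a fixed point. -/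
theorem locked_in_fixed_points_exist
    (ξ ν : ℝ) (hξ : 0 < ξ)
    (hν : 1 / (1 + ξ⁻¹ * Real.sqrt (2 / Real.pi)) < ν) (hν1 : ν < 1) :
    ∃ U ∈ Set.Ioo (0 : ℝ) (1 / 2),
      PhiA U ν 0 ξ = U ∧ (1 - U) ∈ Set.Ioo (1 / 2 : ℝ) 1 ∧
        PhiA (1 - U) ν 0 ξ = 1 - U := by
  obtain ⟨U, hU, hfix⟩ := exists_half_erfc_eq_self (sqrt_pi_div_two_lt_gain hξ hν hν1)
  have hΦ : PhiA U ν 0 ξ = U := by rw [PhiA_zero_eq, hfix]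
  refine ⟨U, hU, hΦ, ⟨by linarith [hU.2], by linarith [hU.1]⟩, ?_⟩
  rw [PhiA_one_sub, neg_zero, hΦ]
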